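/- For every real t there exists an angle θ ∈ ℝ such that for all real u, v one has I₃'(u cos θ − v sin θ, u sin θ + v cos θ, t) = (R² + d² − 2dR cos t)·((R + d)²u² + (R − d)²v² − (R² − d²)²). In particular the zero set of I₃'(·, ·, t) is an ellipse centered at the origin X₄₀ with semiaxis lengths R + d and R − d, independent of t. -/

import Mathlib

noncomputable section

/-- The polynomial `I₃'(x, y, t)` defining the excentral `X₃`-centered inconic. -/
def I3 (R d t x y : ℝ) : ℝ :=
  ((R ^ 2 - d ^ 2) ^ 2 - 8 * d * R ^ 2 * (R * Real.cos t - d) * Real.sin t ^ 2) * x ^ 2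
  + ((R ^ 2 - d ^ 2) ^ 2
      - 4 * d * R * Real.cos t * ((R * Real.cos t - d) ^ 2 - R ^ 2 * Real.sin t ^ 2)) * y ^ 2
  + 4 * d * R * Real.sin t * (2 * R * Real.cos t - R - d) * (2 * R * Real.cos t + R - d)
      * (x * y)
  - (R ^ 2 - d ^ 2) ^ 2 * (R ^ 2 + d ^ 2 - 2 * d * R * Real.cos t)

/-!
The quadratic part of `I₃'(·, ·, t)` has a symmetric matrix `[[A, p], [p, B]]` with trace
`M ((R + d)² + (R - d)²)` and determinant `M² (R + d)² (R - d)²`, where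
`M = R² + d² - 2dR cos t`; so its eigenvalues are `M (R + d)²` and `M (R - d)²`. Rotating the
plane onto a unit eigenvector, taken as the argument of the complex number
`p + (M (R + d)² - A) i`, diagonalises it.
-/

open Real

def binaryQuadForm (A B p x y : ℝ) : ℝ :=
  A * x ^ 2 + B * y ^ 2 + 2 * p * (x * y)

theorem binaryQuadForm_rotate {A B p L c s : ℝ} (hcs : s ^ 2 + c ^ 2 = 1)
    (h₁ : A * c + p * s = L * c) (h₂ : p * c + B * s = L * s) (u v : ℝ) :
    binaryQuadForm A B p (u * c - v * s) (u * s + v * c)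
      = L * u ^ 2 + (A + B - L) * v ^ 2 := by
  unfold binaryQuadForm
  linear_combination (u ^ 2 * c - v ^ 2 * c - 2 * u * v * s) * h₁
    + (u ^ 2 * s - v ^ 2 * s + 2 * u * v * c) * h₂
    + (L * u ^ 2 + (A + B - L) * v ^ 2) * hcs

theorem exists_angle_eigenvector {A B p L : ℝ} (h : p ^ 2 = (L - A) * (L - B)) :
    ∃ θ : ℝ, A * cos θ + p * sin θ = L * cos θ ∧ p * cos θ + B * sin θ = L * sin θ := by
  set z : ℂ := ⟨p, L - A⟩
  have hc : ‖z‖ * cos z.arg = p := Complex.norm_mul_cos_arg z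
  have hs : ‖z‖ * sin z.arg = L - A := Complex.norm_mul_sin_arg z
  refine ⟨z.arg, by linear_combination cos z.arg * hs - sin z.arg * hc, ?_⟩
  -- for `z = 0` the second equation relies on the convention `arg 0 = 0`
  rcases eq_or_ne z 0 with hz | hz
  · have hp : p = 0 := congrArg Complex.re hz
    simp [hz, hp]
  · refine mul_left_cancel₀ (norm_ne_zero_iff.mpr hz) ?_
    linear_combination p * hc + (B - L) * hs + h

theorem exists_rotation_diagonalizing {A B p L₁ L₂ : ℝ} (h₁ : A + B = L₁ + L₂)
    (h₂ : p ^ 2 = (L₁ - A) * (L₁ - B)) :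
    ∃ θ : ℝ, ∀ u v : ℝ,
      binaryQuadForm A B p (u * cos θ - v * sin θ) (u * sin θ + v * cos θ)
        = L₁ * u ^ 2 + L₂ * v ^ 2 := by
  obtain ⟨θ, hA, hB⟩ := exists_angle_eigenvector h₂
  refine ⟨θ, fun u v => ?_⟩
  rw [binaryQuadForm_rotate (sin_sq_add_cos_sq θ) hA hB, h₁]
  ring

namespace I3

variable (R d t : ℝ)

def coeffXX : ℝ := (R ^ 2 - d ^ 2) ^ 2 - 8 * d * R ^ 2 * (R * cos t - d) * sin t ^ 2

def coeffYY : ℝ :=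
  (R ^ 2 - d ^ 2) ^ 2 - 4 * d * R * cos t * ((R * cos t - d) ^ 2 - R ^ 2 * sin t ^ 2)

def coeffXY : ℝ := 2 * d * R * sin t * (2 * R * cos t - R - d) * (2 * R * cos t + R - d)

def scale : ℝ := R ^ 2 + d ^ 2 - 2 * d * R * cos t

theorem coeffXX_add_coeffYY :
    coeffXX R d t + coeffYY R d t
      = scale R d t * (R + d) ^ 2 + scale R d t * (R - d) ^ 2 := by
  simp only [coeffXX, coeffYY, scale, sin_sq]
  ring

theorem coeffXY_sq :
    coeffXY R d t ^ 2
      = (scale R d t * (R + d) ^ 2 - coeffXX R d t)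
          * (scale R d t * (R + d) ^ 2 - coeffYY R d t) := by
  simp only [coeffXX, coeffYY, coeffXY, scale, mul_pow, sin_sq]
  ring

end I3

theorem I3_eq_binaryQuadForm (R d t x y : ℝ) :
    I3 R d t x y = binaryQuadForm (I3.coeffXX R d t) (I3.coeffYY R d t) (I3.coeffXY R d t) x y
      - (R ^ 2 - d ^ 2) ^ 2 * I3.scale R d t := by
  unfold I3 binaryQuadForm I3.coeffXX I3.coeffYY I3.coeffXY I3.scale
  ring

theorem I3_canonical_form_general (R d : ℝ) (t : ℝ) :
    ∃ θ : ℝ, ∀ u v : ℝ,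
      I3 R d t (u * Real.cos θ - v * Real.sin θ) (u * Real.sin θ + v * Real.cos θ)
        = (R ^ 2 + d ^ 2 - 2 * d * R * Real.cos t) *
            ((R + d) ^ 2 * u ^ 2 + (R - d) ^ 2 * v ^ 2 - (R ^ 2 - d ^ 2) ^ 2) := by
  obtain ⟨θ, hθ⟩ :=
    exists_rotation_diagonalizing (I3.coeffXX_add_coeffYY R d t) (I3.coeffXY_sq R d t)
  refine ⟨θ, fun u v => ?_⟩
  rw [I3_eq_binaryQuadForm, hθ, I3.scale]
  ring

/-- there is a rotation `θ` putting `I₃'(·,·,t)` in canonical form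
`(R² + d² − 2dR cos t)·((R+d)²u² + (R−d)²v² − (R²−d²)²)`; hence its zero set is an
ellipse centered at the origin with semiaxes `R + d` and `R − d`, independent of `t`. -/
theorem I3_canonical_form (R d : ℝ) (hd : 0 < d) (hdR : d < R) (t : ℝ) :
    ∃ θ : ℝ, ∀ u v : ℝ,
      I3 R d t (u * Real.cos θ - v * Real.sin θ) (u * Real.sin θ + v * Real.cos θ)
        = (R ^ 2 + d ^ 2 - 2 * d * R * Real.cos t) *
            ((R + d) ^ 2 * u ^ 2 + (R - d) ^ 2 * v ^ 2 - (R ^ 2 - d ^ 2) ^ 2) :=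
  I3_canonical_form_general R d t

end
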